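/- arXiv:1504.05924 — 2 statements merged into one kernel-verified Lean document; each statement's English description precedes it below -/
import Mathlib

section
/- Suppose the trivial extension algebra A⋉X satisfies condition (★), A is 2-torsion free, and L is a Lie derivation on A⋉X with components L(a,x) = (L_A(a)+T(x), L_X(a)+S(x)). Then T(x) = [p, T(x)] for all x∈X, and consequently pT(x)p = 0, qT(x)q = 0, qT(x)p = 0 (so T(x) = pT(x)q), and y·T(x) = 0 = T(x)·y for all x,y∈X. -/
/-!
Condition (★) makes `X = pXq`, so `[p, x] = x` in `A ⋉ X` for every `x ∈ X`. Applying `L` to this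
commutator and taking the `A`-component gives `T(x) = [p, T(x)]`. For an idempotent `p`, an element
`t` with `t = pt - tp` satisfies `ptp = 0` and `2tp = ptp`, so `tp = 0` by 2-torsion freeness and
`pt = t`; every remaining identity follows from `tp = 0`, `qt = 0` and `X = pXq`.
-/

open TrivSqZeroExt MulOpposite

section Corner

variable {A X : Type*} [Ring A] [AddCommGroup X] [Module A X] [Module Aᵐᵒᵖ X] {p : A}

theorem smul_eq_self_of_corner (hp : IsIdempotentElem p)
    (hstar : ∀ x : X, op (1 - p) • (p • x) = x) (x : X) : p • x = x := by
  have h := hstar (p • x)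
  rw [smul_smul, hp.eq, hstar] at h
  exact h.symm

theorem smul_eq_zero_of_corner (hp : IsIdempotentElem p)
    (hstar : ∀ x : X, op (1 - p) • (p • x) = x) {t : A} (ht : t * p = 0) (x : X) :
    t • x = 0 := by
  rw [← smul_eq_self_of_corner hp hstar x, smul_smul, ht, zero_smul]

theorem op_smul_eq_zero_of_corner (hstar : ∀ x : X, op (1 - p) • (p • x) = x) {t : A}
    (ht : (1 - p) * t = 0) (x : X) : op t • x = 0 := by
  rw [← hstar x, smul_smul, ← op_mul, ht, op_zero, zero_smul]

theorem inl_mul_inr_sub_inr_mul_inl_of_corner (hp : IsIdempotentElem p)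
    (hstar : ∀ x : X, op (1 - p) • (p • x) = x) (x : X) :
    (inl p * inr x - inr x * inl p : TrivSqZeroExt A X) = inr x := by
  have hqp : (1 - p) * p = 0 := by rw [sub_mul, one_mul, hp.eq, sub_self]
  rw [inl_mul_inr, inr_mul_inl, smul_eq_self_of_corner hp hstar,
    op_smul_eq_zero_of_corner hstar hqp, inr_zero, sub_zero]

end Corner

section Idempotent

variable {A : Type*} [Ring A] {p t : A}

theorem mul_eq_zero_of_eq_mul_sub_mul (hp : IsIdempotentElem p)
    (htor : ∀ a : A, a + a = 0 → a = 0) (ht : t = p * t - t * p) : t * p = 0 := by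
  have hptp : p * t * p = 0 := by
    have h : p * t = p * t - p * t * p := by
      conv_lhs => rw [ht]
      rw [mul_sub, ← mul_assoc, hp.eq, mul_assoc]
    exact sub_eq_self.mp h.symm
  refine htor _ ?_
  calc t * p + t * p = (p * t - t * p) * p + t * p := by rw [← ht]
    _ = p * t * p - t * (p * p) + t * p := by noncomm_ring
    _ = 0 := by rw [hp.eq, hptp, zero_sub, neg_add_cancel]

theorem mul_eq_self_of_eq_mul_sub_mul (hp : IsIdempotentElem p)
    (htor : ∀ a : A, a + a = 0 → a = 0) (ht : t = p * t - t * p) : p * t = t := by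
  have h := ht
  rw [mul_eq_zero_of_eq_mul_sub_mul hp htor ht, sub_zero] at h
  exact h.symm

end Idempotent

theorem fst_map_eq_mul_sub_mul_of_lie {A X : Type*} [Ring A] [AddCommGroup X] [Module A X]
    [Module Aᵐᵒᵖ X] (L : TrivSqZeroExt A X → TrivSqZeroExt A X)
    (hLie : ∀ u v : TrivSqZeroExt A X,
        L (u * v - v * u) = (L u * v - v * L u) + (u * L v - L v * u))
    {a : A} {x : X} (hx : (inl a * inr x - inr x * inl a : TrivSqZeroExt A X) = inr x) :
    (L (inr x)).fst = a * (L (inr x)).fst - (L (inr x)).fst * a := by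
  have h := congrArg fst (hLie (inl a) (inr x))
  rw [hx] at h
  simpa using h

theorem lieDerivation_component_T_corner_general
    {R A X : Type*} [CommRing R] [Ring A] [Algebra R A]
    [AddCommGroup X] [Module R X] [Module A X] [Module Aᵐᵒᵖ X]
    (p : A) (hp : p * p = p)
    (hstar : ∀ x : X, op (1 - p) • (p • x) = x)
    (htorA : ∀ a : A, a + a = 0 → a = 0)
    (L : TrivSqZeroExt A X →ₗ[R] TrivSqZeroExt A X)
    (hLie : ∀ u v : TrivSqZeroExt A X,
        L (u * v - v * u) = (L u * v - v * L u) + (u * L v - L v * u))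
    (LA : A →ₗ[R] A) (T : X →ₗ[R] A) (LX : A →ₗ[R] X) (S : X →ₗ[R] X)
    (hL : ∀ (a : A) (x : X), L (inl a + inr x) = inl (LA a + T x) + inr (LX a + S x)) :
    (∀ x : X, T x = p * T x - T x * p)
    ∧ (∀ x : X, p * T x * p = 0)
    ∧ (∀ x : X, (1 - p) * T x * (1 - p) = 0)
    ∧ (∀ x : X, (1 - p) * T x * p = 0)
    ∧ (∀ x : X, T x = p * T x * (1 - p))
    ∧ (∀ x y : X, op (T x) • y = 0 ∧ T x • y = 0) := by
  have hLx : ∀ x, (L (inr x)).fst = T x := fun x => by simpa using congrArg fst (hL 0 x)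
  have hT : ∀ x, T x = p * T x - T x * p := fun x => by
    simpa only [hLx] using
      fst_map_eq_mul_sub_mul_of_lie L hLie (inl_mul_inr_sub_inr_mul_inl_of_corner hp hstar x)
  have hTp : ∀ x, T x * p = 0 := fun x => mul_eq_zero_of_eq_mul_sub_mul hp htorA (hT x)
  have hpT : ∀ x, p * T x = T x := fun x => mul_eq_self_of_eq_mul_sub_mul hp htorA (hT x)
  have hqT : ∀ x, (1 - p) * T x = 0 := fun x => by rw [sub_mul, one_mul, hpT, sub_self]
  refine ⟨hT, fun x => ?_, fun x => ?_, fun x => ?_, fun x => ?_, fun x y => ?_⟩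
  · rw [mul_assoc, hTp, mul_zero]
  · rw [hqT, zero_mul]
  · rw [hqT, zero_mul]
  · rw [mul_sub, mul_one, mul_assoc, hTp, mul_zero, sub_zero, hpT]
  · exact ⟨op_smul_eq_zero_of_corner hstar (hqT x) y, smul_eq_zero_of_corner hp hstar (hTp x) y⟩

/-- If `A ⋉ X` satisfies (★), `A` is 2-torsion free and `L`
is a Lie derivation on `A ⋉ X` with components `(L_A, T, L_X, S)`, then
`T(x) = [p, T(x)]`, consequently `pT(x)p = 0`, `qT(x)q = 0`, `qT(x)p = 0`
(so `T(x) = pT(x)q`), and `y·T(x) = 0 = T(x)·y` for all `x, y ∈ X`. -/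
theorem lieDerivation_component_T_corner
    {R A X : Type*} [CommRing R] [Ring A] [Algebra R A]
    [AddCommGroup X] [Module R X] [Module A X] [Module Aᵐᵒᵖ X]
    [SMulCommClass A Aᵐᵒᵖ X] [IsScalarTower R A X] [IsScalarTower R Aᵐᵒᵖ X]
    (p : A) (hp : p * p = p) (hp0 : p ≠ 0) (hp1 : p ≠ 1)
    (hstar : ∀ x : X, op (1 - p) • (p • x) = x)
    (htorA : ∀ a : A, a + a = 0 → a = 0)
    (L : TrivSqZeroExt A X →ₗ[R] TrivSqZeroExt A X)
    (hLie : ∀ u v : TrivSqZeroExt A X,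
        L (u * v - v * u) = (L u * v - v * L u) + (u * L v - L v * u))
    (LA : A →ₗ[R] A) (T : X →ₗ[R] A) (LX : A →ₗ[R] X) (S : X →ₗ[R] X)
    (hL : ∀ (a : A) (x : X), L (inl a + inr x) = inl (LA a + T x) + inr (LX a + S x)) :
    (∀ x : X, T x = p * T x - T x * p)
    ∧ (∀ x : X, p * T x * p = 0)
    ∧ (∀ x : X, (1 - p) * T x * (1 - p) = 0)
    ∧ (∀ x : X, (1 - p) * T x * p = 0)
    ∧ (∀ x : X, T x = p * T x * (1 - p))
    ∧ (∀ x y : X, op (T x) • y = 0 ∧ T x • y = 0) :=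
  lieDerivation_component_T_corner_general p hp hstar htorA L hLie LA T LX S hL
end

section
/- Let A be a unital algebra possessing an idempotent p with p≠0 and p≠1 (and q=1−p), let L_A be a Lie derivation on A that is not proper, and let X be an A-bimodule such that p·x·q = x and [L_A(a), x] = 0 for all a∈A and x∈X. Then the map L defined on the trivial extension algebra A⋉X by L(a,x) = (L_A(a), 0) is a Lie derivation on A⋉X that is not proper. -/
open TrivSqZeroExt MulOpposite

/-- The linear map `(a, x) ↦ (L_A(a), 0)` on the trivial extension algebra. -/
def liftFstMap {R A X : Type*} [CommRing R] [Ring A] [Algebra R A]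
    [AddCommGroup X] [Module R X] [Module A X] [Module Aᵐᵒᵖ X]
    (LA : A →ₗ[R] A) : TrivSqZeroExt A X →ₗ[R] TrivSqZeroExt A X where
  toFun u := inl (LA u.fst)
  map_add' u v := by
    show inl (LA (u.fst + v.fst)) = inl (LA u.fst) + inl (LA v.fst)
    rw [map_add, inl_add]
  map_smul' r u := by
    show inl (LA (r • u.fst)) = r • inl (LA u.fst)
    rw [map_smul, inl_smul]

/-! A decomposition `L = D + ℓ` of `L = liftFstMap L_A` compresses along `inl` and `fst` to the
decomposition `L_A = fst ∘ D ∘ inl + fst ∘ ℓ ∘ inl`: `fst` is a surjective algebra map left inverse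
to `inl`, so it preserves derivations, central values and commutators. The Lie identity for `L`
reduces on `A` to that of `L_A`, and on `X` to `[L_A a, y] = 0`. -/

section LieDerivation

variable {R B : Type*} [Semiring R] [Ring B] [Module R B]

def IsLieDerivation (L : B →ₗ[R] B) : Prop :=
  ∀ u v : B, L (u * v - v * u) = (L u * v - v * L u) + (u * L v - L v * u)

def IsProperLieDerivation (L : B →ₗ[R] B) : Prop :=
  ∃ D ℓ : B →ₗ[R] B,
    (∀ u v : B, D (u * v) = D u * v + u * D v)
    ∧ (∀ u : B, ℓ u ∈ Set.center B)
    ∧ (∀ u v : B, ℓ (u * v - v * u) = 0)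
    ∧ L = D + ℓ

end LieDerivation

theorem IsProperLieDerivation.compress {R A B : Type*} [CommSemiring R] [Ring A] [Algebra R A]
    [Ring B] [Algebra R B] (ι : A →ₐ[R] B) (π : B →ₐ[R] A) (hπι : ∀ a, π (ι a) = a)
    {L : B →ₗ[R] B} (hL : IsProperLieDerivation L) :
    IsProperLieDerivation (π.toLinearMap ∘ₗ L ∘ₗ ι.toLinearMap) := by
  obtain ⟨D, ℓ, hD, hℓ, hℓcomm, rfl⟩ := hL
  refine ⟨π.toLinearMap ∘ₗ D ∘ₗ ι.toLinearMap, π.toLinearMap ∘ₗ ℓ ∘ₗ ι.toLinearMap,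
    fun a b => ?_, fun a => ?_, fun a b => ?_, ?_⟩
  · simp [hD, hπι]
  · refine Semigroup.mem_center_iff.mpr fun b => ?_
    simpa [hπι] using (((hℓ (ι a)).comm (ι b)).map π).symm.eq
  · simp [hℓcomm]
  · rw [LinearMap.add_comp, LinearMap.comp_add]

theorem isLieDerivation_liftFstMap {R A X : Type*} [CommRing R] [Ring A] [Algebra R A]
    [AddCommGroup X] [Module R X] [Module A X] [Module Aᵐᵒᵖ X] [SMulCommClass A Aᵐᵒᵖ X]
    {LA : A →ₗ[R] A} (hLA : IsLieDerivation LA)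
    (hcomm : ∀ (a : A) (x : X), LA a • x = op (LA a) • x) :
    IsLieDerivation (liftFstMap (X := X) LA) := by
  intro u v
  ext
  · simp [liftFstMap, hLA u.fst v.fst]
  · simp [liftFstMap, hcomm]

theorem fstHom_comp_liftFstMap_comp_inlAlgHom {R A X : Type*} [CommRing R] [Ring A]
    [Algebra R A] [AddCommGroup X] [Module R X] [Module A X] [Module Aᵐᵒᵖ X]
    [SMulCommClass A Aᵐᵒᵖ X] [IsScalarTower R A X] [IsScalarTower R Aᵐᵒᵖ X] (LA : A →ₗ[R] A) :
    (fstHom R A X).toLinearMap ∘ₗ liftFstMap LA ∘ₗ (inlAlgHom R A X).toLinearMap = LA := by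
  ext a
  simp [liftFstMap]

theorem liftFstMap_lieDerivation_not_proper_general
    {R A X : Type*} [CommRing R] [Ring A] [Algebra R A]
    [AddCommGroup X] [Module R X] [Module A X] [Module Aᵐᵒᵖ X]
    [SMulCommClass A Aᵐᵒᵖ X] [IsScalarTower R A X] [IsScalarTower R Aᵐᵒᵖ X]
    (LA : A →ₗ[R] A)
    (hLALie : ∀ a b : A, LA (a * b - b * a) = (LA a * b - b * LA a) + (a * LA b - LA b * a))
    (hLAnotproper : ¬ ∃ D ℓ : A →ₗ[R] A,
        (∀ a b : A, D (a * b) = D a * b + a * D b)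
        ∧ (∀ a : A, ℓ a ∈ Set.center A)
        ∧ (∀ a b : A, ℓ (a * b - b * a) = 0)
        ∧ LA = D + ℓ)
    (hcomm : ∀ (a : A) (x : X), LA a • x = op (LA a) • x) :
    (∀ u v : TrivSqZeroExt A X,
        liftFstMap LA (u * v - v * u)
          = (liftFstMap LA u * v - v * liftFstMap LA u)
            + (u * liftFstMap LA v - liftFstMap LA v * u))
    ∧ ¬ ∃ D ℓ : TrivSqZeroExt A X →ₗ[R] TrivSqZeroExt A X,
        (∀ u v : TrivSqZeroExt A X, D (u * v) = D u * v + u * D v)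
        ∧ (∀ u : TrivSqZeroExt A X, ℓ u ∈ Set.center (TrivSqZeroExt A X))
        ∧ (∀ u v : TrivSqZeroExt A X, ℓ (u * v - v * u) = 0)
        ∧ (liftFstMap LA : TrivSqZeroExt A X →ₗ[R] TrivSqZeroExt A X) = D + ℓ := by
  refine ⟨isLieDerivation_liftFstMap hLALie hcomm, fun hproper => hLAnotproper ?_⟩
  have hLAproper := IsProperLieDerivation.compress (inlAlgHom R A X) (fstHom R A X)
    (fun _ => rfl) hproper
  rwa [fstHom_comp_liftFstMap_comp_inlAlgHom] at hLAproper

/-- Let `p` be a nontrivial idempotent of `A`, `L_A` a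
non-proper Lie derivation on `A`, and `X` an `A`-bimodule with `p·x·q = x`
and `[L_A(a), x] = 0` for all `a, x`.  Then `L(a, x) = (L_A(a), 0)` is a
non-proper Lie derivation on the trivial extension algebra `A ⋉ X`. -/
theorem liftFstMap_lieDerivation_not_proper
    {R A X : Type*} [CommRing R] [Ring A] [Algebra R A]
    [AddCommGroup X] [Module R X] [Module A X] [Module Aᵐᵒᵖ X]
    [SMulCommClass A Aᵐᵒᵖ X] [IsScalarTower R A X] [IsScalarTower R Aᵐᵒᵖ X]
    (p : A) (hp : p * p = p) (hp0 : p ≠ 0) (hp1 : p ≠ 1)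
    (hstar : ∀ x : X, op (1 - p) • (p • x) = x)
    (LA : A →ₗ[R] A)
    (hLALie : ∀ a b : A, LA (a * b - b * a) = (LA a * b - b * LA a) + (a * LA b - LA b * a))
    (hLAnotproper : ¬ ∃ D ℓ : A →ₗ[R] A,
        (∀ a b : A, D (a * b) = D a * b + a * D b)
        ∧ (∀ a : A, ℓ a ∈ Set.center A)
        ∧ (∀ a b : A, ℓ (a * b - b * a) = 0)
        ∧ LA = D + ℓ)
    (hcomm : ∀ (a : A) (x : X), LA a • x = op (LA a) • x) :
    (∀ u v : TrivSqZeroExt A X,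
        liftFstMap LA (u * v - v * u)
          = (liftFstMap LA u * v - v * liftFstMap LA u)
            + (u * liftFstMap LA v - liftFstMap LA v * u))
    ∧ ¬ ∃ D ℓ : TrivSqZeroExt A X →ₗ[R] TrivSqZeroExt A X,
        (∀ u v : TrivSqZeroExt A X, D (u * v) = D u * v + u * D v)
        ∧ (∀ u : TrivSqZeroExt A X, ℓ u ∈ Set.center (TrivSqZeroExt A X))
        ∧ (∀ u v : TrivSqZeroExt A X, ℓ (u * v - v * u) = 0)
        ∧ (liftFstMap LA : TrivSqZeroExt A X →ₗ[R] TrivSqZeroExt A X) = D + ℓ :=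
  liftFstMap_lieDerivation_not_proper_general LA hLALie hLAnotproper hcomm
end
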